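/- arXiv:1302.3426 — 6 statements merged into one kernel-verified Lean document; each statement's English description precedes it below -/
import Mathlib

section
/- Let I be an ideal on S, C̄ = ⟨C_δ : δ ∈ S⟩ with C_δ ⊆ δ, let θ be an infinite regular cardinal, let J be a θ-directed partial order, and let t̄ = ⟨t_δ : δ ∈ S⟩ be a witness of OBB_J(C̄, I). For f : Dom(C̄) → J put Fail(f) := {δ ∈ S : ¬(∀α ∈ C_δ) f(α) ≤_J t_δ}, and let I*_t̄ := {A ⊆ S : A ⊆ ∪_{j<j*} Fail(f_j) for some j* < θ and some functions f_j : Dom(C̄) → J}. Then I*_t̄ is a θ-complete ideal on S (in particular S ∉ I*_t̄, i.e., for any j* < θ and any functions f_j : Dom(C̄) → J (j < j*) there is δ ∈ S with f_j(α) ≤_J t_δ for all j < j* and α ∈ C_δ), and t̄ witnesses OBB⁺_J(C̄, I*_t̄). -/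
open Set Cardinal

universe u v

/-- `I` is an ideal on the set `S` of ordinals: it contains the empty set, is closed under
subsets and finite unions, consists of subsets of `S`, and `S ∉ I`. -/
structure IsIdealOn (I : Set (Set Ordinal)) (S : Set Ordinal) : Prop where
  mem_subset : ∀ A ∈ I, A ⊆ S
  empty_mem : ∅ ∈ I
  mono : ∀ A ∈ I, ∀ B ⊆ A, B ∈ I
  union_mem : ∀ A ∈ I, ∀ B ∈ I, A ∪ B ∈ I
  base_not_mem : S ∉ I

/-- `I` is an ideal on the type `ι`. -/
structure IsIdeal {ι : Type u} (I : Set (Set ι)) : Prop where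
  empty_mem : ∅ ∈ I
  mono : ∀ A ∈ I, ∀ B ⊆ A, B ∈ I
  union_mem : ∀ A ∈ I, ∀ B ∈ I, A ∪ B ∈ I
  univ_not_mem : Set.univ ∉ I

/-- `I` is `μ`-complete: closed under unions of fewer than `μ` of its members. -/
def IdealComplete {α : Type u} (I : Set (Set α)) (μ : Cardinal.{u}) : Prop :=
  ∀ T : Set (Set α), T ⊆ I → #T < μ → ⋃₀ T ∈ I

/-- The order type of a set of ordinals. -/
noncomputable def otp (s : Set Ordinal.{0}) : Ordinal.{1} :=
  Ordinal.type (Subrel ((· < ·) : Ordinal → Ordinal → Prop) (· ∈ s))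

/-- `OBB_J(C̄, I)`: there is `t̄ = ⟨t_δ : δ ∈ S⟩` in `J` such that for every
`f : Dom(C̄) → J` the set `{δ ∈ S : ∀ α ∈ C_δ, f α ≤ t_δ}` is `I`-positive. -/
def OBB (J : Type u) [PartialOrder J] (S : Set Ordinal) (C : Ordinal → Set Ordinal)
    (I : Set (Set Ordinal)) : Prop :=
  ∃ t : Ordinal → J, ∀ f : Ordinal → J,
    {δ ∈ S | ∀ α ∈ C δ, f α ≤ t δ} ∉ I

/-- `OBB⁺_J(C̄, I)`: as `OBB` but the good set equals `S` mod `I`. -/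
def OBBplus (J : Type u) [PartialOrder J] (S : Set Ordinal) (C : Ordinal → Set Ordinal)
    (I : Set (Set Ordinal)) : Prop :=
  ∃ t : Ordinal → J, ∀ f : Ordinal → J,
    S \ {δ ∈ S | ∀ α ∈ C δ, f α ≤ t δ} ∈ I

/-- `C̄` is tree-like. -/
def TreeLike (S : Set Ordinal) (C : Ordinal → Set Ordinal) : Prop :=
  ∀ δ₁ ∈ S, ∀ δ₂ ∈ S, ∀ α, α ∈ C δ₁ → α ∈ C δ₂ → C δ₁ ∩ Set.Iio α = C δ₂ ∩ Set.Iio α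

/-- A partial order is `κ`-directed: every subset of cardinality `< κ` has an upper bound. -/
def KDirected (J : Type u) [PartialOrder J] (κ : Cardinal.{u}) : Prop :=
  ∀ s : Set J, #s < κ → ∃ ub : J, ∀ x ∈ s, x ≤ ub

/-- `f ≤_{I*} g` for elements of the product `∏_{i} Ji i`. -/
def prodLE {ι : Type 1} (Ji : ι → Type 1) [∀ i, PartialOrder (Ji i)]
    (Istar : Set (Set ι)) (f g : ∀ i, Ji i) : Prop :=
  {i | ¬ f i ≤ g i} ∈ Istar

/-- `f <_{I*} g` for elements of the product `∏_{i} Ji i`. -/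
def prodLT {ι : Type 1} (Ji : ι → Type 1) [∀ i, PartialOrder (Ji i)]
    (Istar : Set (Set ι)) (f g : ∀ i, Ji i) : Prop :=
  {i | ¬ f i < g i} ∈ Istar

/-- `E` is closed in `lam`. -/
def IsClosedIn (E : Set Ordinal) (lam : Ordinal) : Prop :=
  ∀ δ < lam, δ ≠ 0 → (∀ α < δ, ∃ β ∈ E, α < β ∧ β < δ) → δ ∈ E

/-- `E` is a club of `lam`. -/
def IsClubIn (E : Set Ordinal) (lam : Ordinal) : Prop :=
  (∀ β ∈ E, β < lam) ∧ (∀ α < lam, ∃ β ∈ E, α ≤ β) ∧ IsClosedIn E lam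

/-- `A` is stationary in `lam`. -/
def IsStationaryIn (A : Set Ordinal) (lam : Ordinal) : Prop :=
  ∀ E, IsClubIn E lam → (A ∩ E).Nonempty

/-- The set of `δ ∈ S` where the prediction by `t̄` fails for `f`. -/
def failSet {J : Type 1} [PartialOrder J] (S : Set Ordinal) (C : Ordinal → Set Ordinal)
    (t : Ordinal → J) (f : Ordinal → J) : Set Ordinal :=
  {δ ∈ S | ¬ ∀ α ∈ C δ, f α ≤ t δ}

/-- The ideal `I*_t̄`: sets covered by a union of fewer than `θ` failure sets. -/
def failIdeal {J : Type 1} [PartialOrder J] (S : Set Ordinal) (C : Ordinal → Set Ordinal)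
    (θ : Cardinal.{1}) (t : Ordinal → J) : Set (Set Ordinal) :=
  {A | A ⊆ S ∧ ∃ jstar < θ.ord, ∃ fj : Ordinal.{1} → Ordinal.{0} → J,
    A ⊆ ⋃ j ∈ Set.Iio jstar, failSet S C t (fj j)}

/-!
Membership in `I*_t̄` only asks for a cover by the failure sets of a family of functions indexed by
some type of size `< θ`. Regularity of `θ` makes such families closed under `< θ`-sized unions,
which gives `θ`-completeness. Since `J` is `θ`-directed, fewer than `θ` functions are dominated
pointwise by a single `f`, whose good set is `I`-positive and hence nonempty; a point of it
escapes every failure set of the family, so `S ∉ I*_t̄`.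
-/

theorem Ordinal.iUnion_toType_mk_symm {α : Type*} (o : Ordinal) (F : Ordinal → Set α) :
    ⋃ x : o.ToType, F (Ordinal.ToType.mk.symm x) = ⋃ j ∈ Set.Iio o, F j := by
  rw [Set.biUnion_eq_iUnion]
  exact Ordinal.ToType.mk.symm.toEquiv.iSup_comp (g := fun j : Set.Iio o => F j)

section FailIdeal

variable {J : Type 1} [PartialOrder J] {S : Set Ordinal.{0}} {C : Ordinal.{0} → Set Ordinal.{0}}
  {θ : Cardinal.{1}} {t : Ordinal.{0} → J}

theorem mem_failIdeal_iff {A : Set Ordinal} :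
    A ∈ failIdeal S C θ t ↔ A ⊆ S ∧ ∃ (K : Type 1) (g : K → Ordinal → J),
      #K < θ ∧ A ⊆ ⋃ k, failSet S C t (g k) := by
  refine and_congr_right fun _ => ⟨?_, ?_⟩
  · rintro ⟨jstar, hjstar, fj, hcov⟩
    refine ⟨jstar.ToType, fun x => fj (Ordinal.ToType.mk.symm x), ?_, ?_⟩
    · rwa [Cardinal.mk_toType, ← Cardinal.lt_ord]
    · rwa [Ordinal.iUnion_toType_mk_symm jstar fun j => failSet S C t (fj j)]
  · rintro ⟨K, g, hK, hcov⟩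
    obtain ⟨e⟩ : Nonempty ((#K).ord.ToType ≃ K) := by
      rw [← Cardinal.eq, Cardinal.mk_toType, Cardinal.card_ord]
    -- `t` is only a filler for the indices `j ≥ #K.ord`, which the union never reaches.
    let fj : Ordinal → Ordinal → J := fun j =>
      if h : j < (#K).ord then g (e (Ordinal.ToType.mk ⟨j, h⟩)) else t
    have hfj (x : (#K).ord.ToType) : fj (Ordinal.ToType.mk.symm x) = g (e x) := by
      have hx : (Ordinal.ToType.mk.symm x : Ordinal) < (#K).ord := (Ordinal.ToType.mk.symm x).2
      simp only [fj, dif_pos hx]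
      exact congrArg (g ∘ e) (Ordinal.ToType.mk.apply_symm_apply x)
    refine ⟨(#K).ord, Cardinal.ord_lt_ord.mpr hK, fj, ?_⟩
    rw [← Ordinal.iUnion_toType_mk_symm]
    refine hcov.trans (Set.iUnion_subset fun k => Set.subset_iUnion_of_subset (e.symm k) ?_)
    rw [hfj, e.apply_symm_apply]

theorem exists_mem_forall_le_of_mk_lt (hJ : KDirected J θ)
    (hgood : ∀ f : Ordinal → J, ∃ δ ∈ S, ∀ α ∈ C δ, f α ≤ t δ)
    {K : Type 1} (g : K → Ordinal → J) (hK : #K < θ) :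
    ∃ δ ∈ S, ∀ k, ∀ α ∈ C δ, g k α ≤ t δ := by
  choose u hu using fun α => hJ (Set.range fun k => g k α) (Cardinal.mk_range_le.trans_lt hK)
  obtain ⟨δ, hδS, hδ⟩ := hgood u
  exact ⟨δ, hδS, fun k α hα => (hu α _ ⟨k, rfl⟩).trans (hδ α hα)⟩

theorem failIdeal_idealComplete (hθ : θ.IsRegular) : IdealComplete (failIdeal S C θ t) θ := by
  intro T hT hTθ
  choose hsub K g hK hcov using fun A : T => mem_failIdeal_iff.mp (hT A.2)
  refine mem_failIdeal_iff.mpr ⟨Set.sUnion_subset fun A hA => hsub ⟨A, hA⟩,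
    Σ A : T, K A, fun k => g k.1 k.2, ?_, ?_⟩
  · rw [Cardinal.mk_sigma]
    exact Cardinal.sum_lt_of_isRegular hθ hTθ hK
  · rintro a ⟨A, hA, ha⟩
    obtain ⟨k, hk⟩ := Set.mem_iUnion.mp (hcov ⟨A, hA⟩ ha)
    exact Set.mem_iUnion.mpr ⟨⟨⟨A, hA⟩, k⟩, hk⟩

theorem base_notMem_failIdeal (hJ : KDirected J θ)
    (hgood : ∀ f : Ordinal → J, ∃ δ ∈ S, ∀ α ∈ C δ, f α ≤ t δ) :
    S ∉ failIdeal S C θ t := by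
  intro hS
  obtain ⟨-, K, g, hK, hcov⟩ := mem_failIdeal_iff.mp hS
  obtain ⟨δ, hδS, hδ⟩ := exists_mem_forall_le_of_mk_lt hJ hgood g hK
  obtain ⟨k, hk⟩ := Set.mem_iUnion.mp (hcov hδS)
  exact hk.2 (hδ k)

theorem isIdealOn_failIdeal (hθ : θ.IsRegular) (hJ : KDirected J θ)
    (hgood : ∀ f : Ordinal → J, ∃ δ ∈ S, ∀ α ∈ C δ, f α ≤ t δ) :
    IsIdealOn (failIdeal S C θ t) S where
  mem_subset _ hA := hA.1
  empty_mem := mem_failIdeal_iff.mpr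
    ⟨Set.empty_subset _, PEmpty, fun _ => t, by simpa using hθ.pos, Set.empty_subset _⟩
  mono _ hA _ hBA := ⟨hBA.trans hA.1, hA.2.imp fun _ ⟨h, fj, hcov⟩ => ⟨h, fj, hBA.trans hcov⟩⟩
  union_mem A hA B hB := by
    rw [← Set.sUnion_pair]
    refine failIdeal_idealComplete hθ _ (Set.pair_subset hA hB) ?_
    exact (Cardinal.lt_aleph0_iff_set_finite.mpr (Set.toFinite _)).trans_le hθ.aleph0_le
  base_not_mem := base_notMem_failIdeal hJ hgood

theorem exists_mem_forall_le_of_lt_ord (hS : S ∉ failIdeal S C θ t) {jstar : Ordinal}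
    (hjstar : jstar < θ.ord) (fj : Ordinal → Ordinal → J) :
    ∃ δ ∈ S, ∀ j < jstar, ∀ α ∈ C δ, fj j α ≤ t δ := by
  obtain ⟨δ, hδS, hδ⟩ := Set.not_subset.mp fun h => hS ⟨subset_rfl, jstar, hjstar, fj, h⟩
  simp only [Set.mem_iUnion, failSet, not_exists] at hδ
  exact ⟨δ, hδS, fun j hj => by simpa [hδS] using hδ j hj⟩

theorem failSet_mem_failIdeal (hθ : 1 < θ) (f : Ordinal → J) :
    failSet S C t f ∈ failIdeal S C θ t :=
  mem_failIdeal_iff.mpr ⟨fun _ h => h.1, PUnit, fun _ => f, by simpa using hθ,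
    Set.subset_iUnion_of_subset PUnit.unit subset_rfl⟩

theorem diff_sep_eq_failSet (f : Ordinal → J) :
    S \ {δ ∈ S | ∀ α ∈ C δ, f α ≤ t δ} = failSet S C t f := by
  ext δ
  simp only [failSet, Set.mem_sdiff, Set.mem_ofPred_eq]
  tauto

end FailIdeal

theorem stmt1_general {J : Type 1} [PartialOrder J]
    (S : Set Ordinal) (C : Ordinal → Set Ordinal) (I : Set (Set Ordinal))
    (hI : IsIdealOn I S)
    (θ : Cardinal.{1}) (hθ : θ.IsRegular)
    (hJdir : KDirected J θ)
    (t : Ordinal → J)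
    (hwit : ∀ f : Ordinal → J, {δ ∈ S | ∀ α ∈ C δ, f α ≤ t δ} ∉ I) :
    IsIdealOn (failIdeal S C θ t) S ∧
    IdealComplete (failIdeal S C θ t) θ ∧
    (∀ jstar < θ.ord, ∀ fj : Ordinal.{1} → Ordinal.{0} → J,
      ∃ δ ∈ S, ∀ j < jstar, ∀ α ∈ C δ, fj j α ≤ t δ) ∧
    (∀ f : Ordinal → J, S \ {δ ∈ S | ∀ α ∈ C δ, f α ≤ t δ} ∈ failIdeal S C θ t) := by
  have hgood (f : Ordinal → J) : ∃ δ ∈ S, ∀ α ∈ C δ, f α ≤ t δ :=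
    Set.nonempty_iff_ne_empty.mpr fun h => hwit f (h ▸ hI.empty_mem)
  have hideal := isIdealOn_failIdeal hθ hJdir hgood
  refine ⟨hideal, failIdeal_idealComplete hθ,
    fun _ hjstar => exists_mem_forall_le_of_lt_ord hideal.base_not_mem hjstar, fun f => ?_⟩
  rw [diff_sep_eq_failSet]
  exact failSet_mem_failIdeal (hθ.nat_lt 1) f

/-- If `I` is an ideal on `S`, `θ` is an infinite regular cardinal, `J` is a
`θ`-directed partial order and `t̄` witnesses `OBB_J(C̄, I)`, then `I*_t̄` is a `θ`-complete
ideal on `S` (in particular `S ∉ I*_t̄`, i.e. any `< θ` many functions admit a common good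
`δ ∈ S`), and `t̄` witnesses `OBB⁺_J(C̄, I*_t̄)`. -/
theorem stmt1 {J : Type 1} [PartialOrder J]
    (S : Set Ordinal) (C : Ordinal → Set Ordinal) (I : Set (Set Ordinal))
    (hI : IsIdealOn I S) (hC : ∀ δ ∈ S, C δ ⊆ Set.Iio δ)
    (θ : Cardinal.{1}) (hθ : θ.IsRegular)
    (hJdir : KDirected J θ)
    (t : Ordinal → J)
    (hwit : ∀ f : Ordinal → J, {δ ∈ S | ∀ α ∈ C δ, f α ≤ t δ} ∉ I) :
    IsIdealOn (failIdeal S C θ t) S ∧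
    IdealComplete (failIdeal S C θ t) θ ∧
    (∀ jstar < θ.ord, ∀ fj : Ordinal.{1} → Ordinal.{0} → J,
      ∃ δ ∈ S, ∀ j < jstar, ∀ α ∈ C δ, fj j α ≤ t δ) ∧
    (∀ f : Ordinal → J, S \ {δ ∈ S | ∀ α ∈ C δ, f α ≤ t δ} ∈ failIdeal S C θ t) :=
  stmt1_general S C I hI θ hθ hJdir t hwit
end

section
/- Assume: (a) OBB_J(C̄, I) holds, where I is an ideal on S and otp(C_δ) ≤ κ for every δ ∈ S; (b) I is |i*|⁺-complete; (c) ⟨J_i : i < i*⟩ is a sequence of partial orders, each satisfying (∀s)(∃t)(s < t); (d) I* is a κ⁺-complete ideal on i*; (e) J is a partial order and ḡ = ⟨g_t : t ∈ J⟩, with g_t ∈ ∏_{i<i*} J_i, is such that {g_t : t ∈ J} is cofinal in (∏_{i<i*} J_i, ≤_{I*}) and s ≤_J t implies g_s ≤_{I*} g_t. Then {i < i* : OBB_{J_i}(C̄, I)} = i* mod I*. -/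
open Set Cardinal

universe u v

/-!
Suppose the set `B` of `i` with `¬ OBB_{J_i}` were `I*`-positive, and let `t̄` witness
`OBB_J`. For each `i ∈ B` the sequence `⟨g_{t_δ}(i)⟩` fails, through some `f_i`; gluing the
`f_i` and pushing each value up by cofinality to some `g_{h(α)}` gives `h : Dom(C̄) → J`.
For every `δ` on which `t_δ` bounds `h` on `C_δ`, the at most `κ` exceptional sets of
`f(α) ≤_{I*} g_{h(α)} ≤_{I*} g_{t_δ}` cannot cover `B`, so `δ` lies in the `I`-small set
refuting `f_i` for some `i ∈ B`. These are `≤ |i*|` sets in `I`, so `h` refutes `t̄`.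
-/

theorem IdealComplete.biUnion_mem {α β : Type u} {I : Set (Set α)} {μ : Cardinal.{u}}
    (hI : IdealComplete I μ) {s : Set β} {A : β → Set α} (hA : ∀ b ∈ s, A b ∈ I)
    (hs : #s < μ) : ⋃ b ∈ s, A b ∈ I := by
  rw [← sUnion_image]
  exact hI _ (image_subset_iff.mpr hA) (mk_image_le.trans_lt hs)

theorem mk_le_of_otp_le_ord {s : Set Ordinal.{0}} {κ : Cardinal.{1}} (h : otp s ≤ κ.ord) :
    #s ≤ κ := by
  simpa [otp, Ordinal.card_type] using card_le_of_le_ord h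

section Product

variable {ι : Type 1} {Ji : ι → Type 1} [∀ i, PartialOrder (Ji i)] {Istar : Set (Set ι)}

theorem prodLE_trans (hIstar : IsIdeal Istar) {f g h : ∀ i, Ji i}
    (hfg : prodLE Ji Istar f g) (hgh : prodLE Ji Istar g h) : prodLE Ji Istar f h :=
  hIstar.mono _ (hIstar.union_mem _ hfg _ hgh) _ fun _ hi =>
    not_and_or.mp fun ⟨h₁, h₂⟩ => hi (h₁.trans h₂)

theorem exists_mem_forall_le_of_prodLE (hIstar : IsIdeal Istar) {μ : Cardinal.{1}}
    (hcomp : IdealComplete Istar μ) {B : Set ι} (hB : B ∉ Istar) {β : Type 1} {s : Set β}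
    (hs : #s < μ) {f g : β → ∀ i, Ji i} (hfg : ∀ b ∈ s, prodLE Ji Istar (f b) (g b)) :
    ∃ i ∈ B, ∀ b ∈ s, f b i ≤ g b i := by
  have hE := hcomp.biUnion_mem hfg hs
  obtain ⟨i, hiB, hiE⟩ := not_subset.mp fun hsub => hB (hIstar.mono _ hE _ hsub)
  simp only [mem_iUnion, not_exists] at hiE
  exact ⟨i, hiB, fun b hb => not_not.mp (hiE b hb)⟩

end Product

theorem not_OBB_iff {J : Type u} [PartialOrder J] {S : Set Ordinal.{v}}
    {C : Ordinal.{v} → Set Ordinal.{v}} {I : Set (Set Ordinal.{v})} :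
    ¬ OBB J S C I ↔
      ∀ t : Ordinal.{v} → J, ∃ f : Ordinal.{v} → J, {δ ∈ S | ∀ α ∈ C δ, f α ≤ t δ} ∈ I := by
  simp [OBB]

theorem exists_pi_refuting_of_not_OBB {ι : Type*} {Ji : ι → Type u} [∀ i, PartialOrder (Ji i)]
    {S : Set Ordinal.{v}} {C : Ordinal.{v} → Set Ordinal.{v}} {I : Set (Set Ordinal.{v})}
    (t : ∀ i, Ordinal.{v} → Ji i) :
    ∃ f : Ordinal.{v} → ∀ i, Ji i, ∀ i, ¬ OBB (Ji i) S C I →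
      {δ ∈ S | ∀ α ∈ C δ, f α i ≤ t i δ} ∈ I := by
  have hfi : ∀ i, ∃ fi : Ordinal.{v} → Ji i, ¬ OBB (Ji i) S C I →
      {δ ∈ S | ∀ α ∈ C δ, fi α ≤ t i δ} ∈ I := fun i => by
    by_cases hi : OBB (Ji i) S C I
    · exact ⟨t i, fun h => (h hi).elim⟩
    · obtain ⟨fi, hfi⟩ := not_OBB_iff.mp hi (t i)
      exact ⟨fi, fun _ => hfi⟩
  choose F hF using hfi
  exact ⟨fun α i => F i α, hF⟩

theorem stmt3_general {ι : Type 1} {J : Type 1} [PartialOrder J]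
    (Ji : ι → Type 1) [∀ i, PartialOrder (Ji i)]
    (S : Set Ordinal) (C : Ordinal → Set Ordinal)
    (I : Set (Set Ordinal)) (Istar : Set (Set ι)) (κ : Cardinal.{1})
    -- (a)
    (hOBB : OBB J S C I) (hI : IsIdealOn I S)
    (hotp : ∀ δ ∈ S, otp (C δ) ≤ κ.ord)
    -- (b) `I` is `|i*|⁺`-complete
    (hIcomp : IdealComplete I (Order.succ #ι))
    -- (d) `I*` is a `κ⁺`-complete ideal on `i*`
    (hIstar : IsIdeal Istar)
    (hIstarComp : IdealComplete Istar (Order.succ κ))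
    -- (e)
    (g : J → ∀ i, Ji i)
    (hcof : ∀ f : ∀ i, Ji i, ∃ t : J, prodLE Ji Istar f (g t))
    (hmono : ∀ s t : J, s ≤ t → prodLE Ji Istar (g s) (g t)) :
    {i | ¬ OBB (Ji i) S C I} ∈ Istar := by
  by_contra hB
  obtain ⟨t, ht⟩ := hOBB
  obtain ⟨f, hf⟩ := exists_pi_refuting_of_not_OBB (S := S) (C := C) (I := I)
    fun i δ => g (t δ) i
  choose h hh using fun α => hcof (f α)
  have hsmall : ⋃ i ∈ {i | ¬ OBB (Ji i) S C I}, {δ ∈ S | ∀ α ∈ C δ, f α i ≤ g (t δ) i} ∈ I :=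
    hIcomp.biUnion_mem hf ((mk_set_le _).trans_lt (Order.lt_succ _))
  refine ht h (hI.mono _ hsmall _ ?_)
  rintro δ ⟨hδS, hhδ⟩
  obtain ⟨i, hiB, hi⟩ := exists_mem_forall_le_of_prodLE hIstar hIstarComp hB
    ((mk_le_of_otp_le_ord (hotp δ hδS)).trans_lt (Order.lt_succ κ))
    (g := fun _ => g (t δ)) fun α hα => prodLE_trans hIstar (hh α) (hmono _ _ (hhδ α hα))
  exact mem_biUnion hiB ⟨hδS, hi⟩

/-- Pos (A) of the main lemma. Under (a)–(e), with `I*` a `κ⁺`-complete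
ideal on `i*`, the set `{i < i* : OBB_{J_i}(C̄, I)}` equals `i*` mod `I*`. -/
theorem stmt3 {ι : Type 1} {J : Type 1} [PartialOrder J]
    (Ji : ι → Type 1) [∀ i, PartialOrder (Ji i)]
    (S : Set Ordinal) (C : Ordinal → Set Ordinal)
    (I : Set (Set Ordinal)) (Istar : Set (Set ι)) (κ : Cardinal.{1})
    -- (a)
    (hOBB : OBB J S C I) (hI : IsIdealOn I S) (hC : ∀ δ ∈ S, C δ ⊆ Set.Iio δ)
    (hotp : ∀ δ ∈ S, otp (C δ) ≤ κ.ord)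
    -- (b) `I` is `|i*|⁺`-complete
    (hIcomp : IdealComplete I (Order.succ #ι))
    -- (c)
    (hJi : ∀ i, ∀ s : Ji i, ∃ t : Ji i, s < t)
    -- (d) `I*` is a `κ⁺`-complete ideal on `i*`
    (hIstar : IsIdeal Istar)
    (hIstarComp : IdealComplete Istar (Order.succ κ))
    -- (e)
    (g : J → ∀ i, Ji i)
    (hcof : ∀ f : ∀ i, Ji i, ∃ t : J, prodLE Ji Istar f (g t))
    (hmono : ∀ s t : J, s ≤ t → prodLE Ji Istar (g s) (g t)) :
    {i | ¬ OBB (Ji i) S C I} ∈ Istar :=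
  stmt3_general Ji S C I Istar κ hOBB hI hotp hIcomp hIstar hIstarComp g hcof hmono
end

section
/- Assume: (a) OBB_J(C̄, I) holds, where I is an ideal on S and otp(C_δ) ≤ κ for every δ ∈ S; (b) I is |i*|⁺-complete; (c) ⟨J_i : i < i*⟩ is a sequence of partial orders, each satisfying (∀s)(∃t)(s < t); (d) I* is an ideal on i*; (e) J is a partial order and ḡ = ⟨g_t : t ∈ J⟩, with g_t ∈ ∏_{i<i*} J_i, is such that {g_t : t ∈ J} is cofinal in (∏_{i<i*} J_i, ≤_{I*}) and s ≤_J t implies g_s ≤_{I*} g_t; (f) there is a function F : ∏_{i<i*} J_i → J such that f ≤_{I*} g_{F(f)} for every f ∈ ∏_{i<i*} J_i, and such that whenever f_ε ∈ ∏_{i<i*} J_i (for ε < κ) and t ∈ J satisfy F(f_ε) ≤_J t for all ε < κ, then {i < i* : f_ε(i) ≤_{J_i} g_t(i) for every ε < κ} ∈ I*⁺. Then {i < i* : OBB_{J_i}(C̄, I)} ∈ I*⁺. -/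
open Set Cardinal

universe u v

/-! Suppose the set `A` of coordinates `i` with `OBB_{J_i}` lies in `I*`. Push the witness `t̄`
for `OBB_J` down to each coordinate as `δ ↦ g_{t_δ}(i)`; off `A` it is refuted by some `f_i`, on a
set `W_i ∈ I`, and `|i*|⁺`-completeness puts `⋃ W_i` in `I`. Feeding `α ↦ F(⟨f_i(α)⟩_i)` to
`OBB_J` gives `δ ∉ ⋃ W_i` with `F(⟨f_i(α)⟩_i) ≤ t_δ` on `C_δ`. Listing `C_δ` in order type
`≤ κ`, clause (f) yields an `I*`-positive set of `i` at which every `f_i(α)`, `α ∈ C_δ`, lies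
below `g_{t_δ}(i)`; such an `i` outside `A` puts `δ` into `W_i`. -/

theorem IsIdealOn.exists_mem_notMem {I : Set (Set Ordinal)} {S : Set Ordinal}
    (hI : IsIdealOn I S) {P U : Set Ordinal} (hP : P ∉ I) (hU : U ∈ I) : ∃ x ∈ P, x ∉ U := by
  by_contra! h
  exact hP (hI.mono U hU P h)

theorem IsIdeal.exists_mem_notMem {ι : Type u} {I : Set (Set ι)} (hI : IsIdeal I)
    {P U : Set ι} (hP : P ∉ I) (hU : U ∈ I) : ∃ x ∈ P, x ∉ U := by
  by_contra! h
  exact hP (hI.mono U hU P h)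

theorem IdealComplete.biUnion_mem_s5 {ι α : Type u} {I : Set (Set α)}
    (hI : IdealComplete I (Order.succ #ι)) {B : Set ι} {W : ι → Set α}
    (hW : ∀ i ∈ B, W i ∈ I) : ⋃ i ∈ B, W i ∈ I := by
  rw [← sUnion_image]
  refine hI _ (image_subset_iff.mpr hW) ?_
  calc #(W '' B) ≤ #B := mk_image_le
    _ ≤ #ι := mk_set_le B
    _ < Order.succ #ι := Order.lt_succ _

/-- The implication sits inside the existential so that `f` can be chosen for every coordinate
at once, without a proof of `¬ OBB`. -/
theorem exists_refutation_of_not_OBB {J : Type u} [PartialOrder J] (S : Set Ordinal.{v})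
    (C : Ordinal.{v} → Set Ordinal.{v}) (I : Set (Set Ordinal.{v})) (t : Ordinal.{v} → J) :
    ∃ f : Ordinal.{v} → J, ¬ OBB J S C I → {δ ∈ S | ∀ α ∈ C δ, f α ≤ t δ} ∈ I := by
  by_cases h : OBB J S C I
  · exact ⟨t, fun h' => (h' h).elim⟩
  · simp only [OBB, not_exists, not_forall, not_not] at h
    obtain ⟨f, hf⟩ := h t
    exact ⟨f, fun _ => hf⟩

theorem exists_surjOn_Iio_of_otp_le {s : Set Ordinal.{0}} {o : Ordinal.{1}} (hs : s.Nonempty)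
    (h : otp s ≤ o) : ∃ e : Ordinal.{1} → Ordinal.{0}, (∀ ε, e ε ∈ s) ∧ SurjOn e (Iio o) s := by
  classical
  obtain ⟨a, ha⟩ := hs
  let r := Subrel ((· < ·) : Ordinal → Ordinal → Prop) (· ∈ s)
  refine ⟨fun ε => if hε : ε < Ordinal.type r then (Ordinal.enum r ⟨ε, hε⟩ : Ordinal) else a,
    fun ε => ?_, fun α hα => ?_⟩
  · dsimp only
    split_ifs
    exacts [(Ordinal.enum r _).2, ha]
  · have hlt := Ordinal.typein_lt_type r ⟨α, hα⟩
    refine ⟨Ordinal.typein r ⟨α, hα⟩, lt_of_lt_of_le hlt h, ?_⟩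
    simp only [dif_pos hlt, Ordinal.enum_typein]

theorem stmt5_general {ι : Type 1} {J : Type 1} [PartialOrder J]
    (Ji : ι → Type 1) [∀ i, PartialOrder (Ji i)]
    (S : Set Ordinal) (C : Ordinal → Set Ordinal)
    (I : Set (Set Ordinal)) (Istar : Set (Set ι)) (κ : Cardinal.{1})
    -- (a)
    (hOBB : OBB J S C I) (hI : IsIdealOn I S)
    (hotp : ∀ δ ∈ S, otp (C δ) ≤ κ.ord)
    -- (b) `I` is `|i*|⁺`-complete
    (hIcomp : IdealComplete I (Order.succ #ι))
    -- (d)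
    (hIstar : IsIdeal Istar)
    -- (e)
    (g : J → ∀ i, Ji i)
    -- (f)
    (F : (∀ i, Ji i) → J)
    (hFbound : ∀ fs : Ordinal.{1} → ∀ i, Ji i, ∀ t : J,
      (∀ ε < κ.ord, F (fs ε) ≤ t) →
      {i | ∀ ε < κ.ord, fs ε i ≤ g t i} ∉ Istar) :
    {i | OBB (Ji i) S C I} ∉ Istar := by
  intro hA
  obtain ⟨t, ht⟩ := hOBB
  choose f hf using fun i => exists_refutation_of_not_OBB S C I fun δ => g (t δ) i
  let W i := {δ ∈ S | ∀ α ∈ C δ, f i α ≤ g (t δ) i}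
  have hU : ⋃ i ∈ {i | OBB (Ji i) S C I}ᶜ, W i ∈ I := hIcomp.biUnion_mem_s5 hf
  obtain ⟨δ, ⟨hδS, hδ⟩, hδU⟩ := hI.exists_mem_notMem (ht fun α => F fun i => f i α) hU
  have hCδ : (C δ).Nonempty := by
    obtain ⟨i₀, -, hi₀⟩ := hIstar.exists_mem_notMem hIstar.univ_not_mem hA
    by_contra hC
    exact hδU (mem_biUnion hi₀ ⟨hδS, fun α hα => (hC ⟨α, hα⟩).elim⟩)
  obtain ⟨e, he, he_surj⟩ := exists_surjOn_Iio_of_otp_le hCδ (hotp δ hδS)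
  obtain ⟨i, hi, hiA⟩ := hIstar.exists_mem_notMem
    (hFbound (fun ε i => f i (e ε)) (t δ) fun ε _ => hδ _ (he ε)) hA
  refine hδU (mem_biUnion hiA ⟨hδS, fun α hα => ?_⟩)
  obtain ⟨ε, hε, rfl⟩ := he_surj hα
  exact hi ε hε

/-- Pos (C) of the main lemma. Under (a)–(e) together with (f): a choice
function `F` into `J` dominating each product element, such that whenever `κ` many products
have their `F`-values below `t`, positively many coordinates are dominated by `g_t`;
then `{i < i* : OBB_{J_i}(C̄, I)}` is `I*`-positive. -/
theorem stmt5 {ι : Type 1} {J : Type 1} [PartialOrder J]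
    (Ji : ι → Type 1) [∀ i, PartialOrder (Ji i)]
    (S : Set Ordinal) (C : Ordinal → Set Ordinal)
    (I : Set (Set Ordinal)) (Istar : Set (Set ι)) (κ : Cardinal.{1})
    -- (a)
    (hOBB : OBB J S C I) (hI : IsIdealOn I S) (hC : ∀ δ ∈ S, C δ ⊆ Set.Iio δ)
    (hotp : ∀ δ ∈ S, otp (C δ) ≤ κ.ord)
    -- (b) `I` is `|i*|⁺`-complete
    (hIcomp : IdealComplete I (Order.succ #ι))
    -- (c)
    (hJi : ∀ i, ∀ s : Ji i, ∃ t : Ji i, s < t)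
    -- (d)
    (hIstar : IsIdeal Istar)
    -- (e)
    (g : J → ∀ i, Ji i)
    (hcof : ∀ f : ∀ i, Ji i, ∃ t : J, prodLE Ji Istar f (g t))
    (hmono : ∀ s t : J, s ≤ t → prodLE Ji Istar (g s) (g t))
    -- (f)
    (F : (∀ i, Ji i) → J)
    (hF : ∀ f : ∀ i, Ji i, prodLE Ji Istar f (g (F f)))
    (hFbound : ∀ fs : Ordinal.{1} → ∀ i, Ji i, ∀ t : J,
      (∀ ε < κ.ord, F (fs ε) ≤ t) →
      {i | ∀ ε < κ.ord, fs ε i ≤ g t i} ∉ Istar) :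
    {i | OBB (Ji i) S C I} ∉ Istar :=
  stmt5_general Ji S C I Istar κ hOBB hI hotp hIcomp hIstar g F hFbound
end

section
/- Assume: (a) OBB⁺_J(C̄, I) holds and κ is a regular cardinal with |C_δ| < κ for every δ ∈ S; (b) I is a (2^{|i*|})⁺-complete ideal on S; (c) ⟨J_i : i < i*⟩ is a sequence of partial orders, each satisfying (∀s)(∃t)(s < t); (d) I* is a κ-complete ideal on i*; (e) J is a partial order, ḡ = ⟨g_t : t ∈ J⟩ with g_t ∈ ∏_{i<i*} J_i, and s <_J t implies g_s <_{I*} g_t; (f) for every A₀ ∈ I*⁺: whenever ε* < κ and g^ε ∈ ∏_{i<i*} J_i for ε < ε*, there is A ⊆ A₀ with A ∈ I*⁺ such that for each ε < ε* there is t ∈ J with {i ∈ A : ¬(g^ε(i) <_{J_i} g_t(i))} ∈ I*. Then {i < i* : OBB_{J_i}(C̄, I)} = i* mod I*. -/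
open Set Cardinal

universe u v

/-!
Suppose the set `B` of coordinates `i` at which `OBB_{J_i}(C̄, I)` fails were `I*`-positive, and
let `t̄` witness `OBB⁺_J(C̄, I)`. For `i ∈ B` the candidate `δ ↦ g_{t_δ}(i)` fails, say via
`f_i`. For each `δ`, hypothesis (f) dominates the fewer than `κ` functions `⟨f_i(α) : i⟩`,
`α ∈ C_δ`, by members of `ḡ` on a positive `A_δ ⊆ B`; by `(2^{|i*|})⁺`-completeness of `I` one
set `a` serves for `I`-positively many `δ`. Choosing `f(α) ∈ J` with `g_{f(α)}` dominating
`⟨f_i(α) : i⟩` on `a`, `OBB⁺_J` gives `f(α) ≤ t_δ` on `C_δ` for almost all `δ`, and then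
`κ`-completeness of `I*` yields one `i ∈ a` with `f_i(α) < g_{t_δ}(i)` for all `α ∈ C_δ`. So an
`I`-positive set is covered by at most `|i*|` sets of `I`, which is impossible.
-/

theorem IdealComplete.iUnion_mem {α : Type u} {I : Set (Set α)} {μ : Cardinal.{u}}
    (hI : IdealComplete I μ) {β : Type u} {s : β → Set α} (hs : ∀ b, s b ∈ I) (hβ : #β < μ) :
    ⋃ b, s b ∈ I := by
  rw [← sUnion_range]
  exact hI _ (range_subset_iff.2 hs) (mk_range_le.trans_lt hβ)

theorem IdealComplete.exists_notMem_of_subset_iUnion {α : Type u} {I : Set (Set α)}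
    {μ : Cardinal.{u}} (hI : IdealComplete I μ) (hmono : ∀ A ∈ I, ∀ B ⊆ A, B ∈ I)
    {β : Type u} {s : β → Set α} (hβ : #β < μ) {T : Set α} (hT : T ∉ I)
    (hTs : T ⊆ ⋃ b, s b) : ∃ b, s b ∉ I := by
  by_contra! hs
  exact hT (hmono _ (hI.iUnion_mem hs hβ) _ hTs)

theorem IsIdealOn.inter_notMem {I : Set (Set Ordinal)} {S : Set Ordinal} (hI : IsIdealOn I S)
    {A B : Set Ordinal} (hAS : A ⊆ S) (hA : A ∉ I) (hB : S \ B ∈ I) : A ∩ B ∉ I :=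
  fun hAB => hA <| hI.mono _ (hI.union_mem _ hAB _ hB) _ fun δ hδ =>
    (em (δ ∈ B)).imp (fun h => ⟨hδ, h⟩) (fun h => ⟨hAS hδ, h⟩)

section Domination

variable {ι J : Type 1} {Ji : ι → Type 1} [∀ i, PartialOrder (Ji i)]
  {Istar : Set (Set ι)}

def DominatedOn (Istar : Set (Set ι)) (g : J → ∀ i, Ji i) (A : Set ι) (x : ∀ i, Ji i) :
    Prop :=
  ∃ t : J, {i | i ∈ A ∧ ¬ x i < g t i} ∈ Istar

theorem prodLE_of_le [PartialOrder J] (hIstar : IsIdeal Istar) {g : J → ∀ i, Ji i}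
    (hmono : ∀ s t : J, s < t → prodLT Ji Istar (g s) (g t)) {s t : J} (hst : s ≤ t) :
    prodLE Ji Istar (g s) (g t) := by
  rcases hst.lt_or_eq with hlt | rfl
  · exact hIstar.mono _ (hmono s t hlt) _ fun i hi hlt' => hi hlt'.le
  · simpa [prodLE] using hIstar.empty_mem

/-- Hypothesis (f) of the theorem, reindexed from ordinals below `κ` to any small index type. -/
theorem exists_dominatedOn_of_mk_lt {κ : Cardinal.{1}} {g : J → ∀ i, Ji i}
    (hbound : ∀ A₀ : Set ι, A₀ ∉ Istar → ∀ es < κ.ord, ∀ gs : Ordinal.{1} → ∀ i, Ji i,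
      ∃ A : Set ι, A ⊆ A₀ ∧ A ∉ Istar ∧
        ∀ ε < es, ∃ t : J, {i | i ∈ A ∧ ¬ gs ε i < g t i} ∈ Istar)
    {A₀ : Set ι} (hA₀ : A₀ ∉ Istar) {β : Type 1} (hβ : #β < κ) (x : β → ∀ i, Ji i) :
    ∃ A ⊆ A₀, A ∉ Istar ∧ ∀ b, DominatedOn Istar g A (x b) := by
  rcases isEmpty_or_nonempty β with hempty | ⟨⟨b₀⟩⟩
  · exact ⟨A₀, subset_rfl, hA₀, isEmptyElim⟩
  obtain ⟨r, _, hr⟩ := exists_ord_eq β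
  let gs : Ordinal → ∀ i, Ji i := fun ε =>
    if hε : ε < Ordinal.type r then x (Ordinal.enum r ⟨ε, hε⟩) else x b₀
  obtain ⟨A, hAA₀, hA, hdom⟩ := hbound A₀ hA₀ _ (hr ▸ ord_lt_ord.2 hβ) gs
  refine ⟨A, hAA₀, hA, fun b => ?_⟩
  have hgs : gs (Ordinal.typein r b) = x b := by
    simp only [gs, dif_pos (Ordinal.typein_lt_type r b), Ordinal.enum_typein]
  simpa only [DominatedOn, hgs] using hdom _ (Ordinal.typein_lt_type r b)

theorem exists_mem_forall_lt_of_dominatedOn [PartialOrder J] {κ : Cardinal.{1}}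
    (hIstar : IsIdeal Istar) (hIstarComp : IdealComplete Istar κ) {g : J → ∀ i, Ji i}
    (hmono : ∀ s t : J, s < t → prodLT Ji Istar (g s) (g t)) {a : Set ι} (ha : a ∉ Istar)
    {β : Type 1} (hβ : #β < κ) (x : β → ∀ i, Ji i) (s : β → J) (t : J) (hst : ∀ b, s b ≤ t)
    (hx : ∀ b, {i | i ∈ a ∧ ¬ x b i < g (s b) i} ∈ Istar) :
    ∃ i ∈ a, ∀ b, x b i < g t i := by
  let bad : β → Set ι := fun b => {i | i ∈ a ∧ ¬ x b i < g (s b) i} ∪ {i | ¬ g (s b) i ≤ g t i}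
  have hbad : ⋃ b, bad b ∈ Istar := hIstarComp.iUnion_mem
    (fun b => hIstar.union_mem _ (hx b) _ (prodLE_of_le hIstar hmono (hst b))) hβ
  obtain ⟨i, hia, hi⟩ := not_subset.1 fun h => ha (hIstar.mono _ hbad _ h)
  refine ⟨i, hia, fun b => ?_⟩
  simp only [bad, mem_iUnion, mem_union, mem_ofPred_eq, not_exists, not_or, not_and, not_not] at hi
  exact ((hi b).1 hia).trans_le (hi b).2

theorem exists_mem_notMem_of_dominatedOn [PartialOrder J] {S : Set Ordinal}
    {C : Ordinal → Set Ordinal} {I : Set (Set Ordinal)} {κ : Cardinal.{1}} (hI : IsIdealOn I S)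
    (hIcomp : IdealComplete I (Order.succ (2 ^ #ι))) (hCcard : ∀ δ ∈ S, #(C δ) < κ)
    (hIstar : IsIdeal Istar) (hIstarComp : IdealComplete Istar κ) {g : J → ∀ i, Ji i}
    (hmono : ∀ s t : J, s < t → prodLT Ji Istar (g s) (g t))
    {t : Ordinal → J} (ht : ∀ f : Ordinal → J, S \ {δ ∈ S | ∀ α ∈ C δ, f α ≤ t δ} ∈ I)
    {a : Set ι} (ha : a ∉ Istar) {T : Set Ordinal} (hTS : T ⊆ S) (hT : T ∉ I)
    (fi : ∀ i, Ordinal → Ji i)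
    (hdom : ∀ δ ∈ T, ∀ α ∈ C δ, DominatedOn Istar g a (fun i => fi i α)) :
    ∃ i ∈ a, {δ ∈ S | ∀ α ∈ C δ, fi i α ≤ g (t δ) i} ∉ I := by
  have hf : ∀ α, ∃ s : J, (∃ δ ∈ T, α ∈ C δ) → {i | i ∈ a ∧ ¬ fi i α < g s i} ∈ Istar := by
    intro α
    by_cases hα : ∃ δ ∈ T, α ∈ C δ
    · obtain ⟨δ, hδ, hαδ⟩ := hα
      exact (hdom δ hδ α hαδ).imp fun s hs _ => hs
    · exact ⟨t α, fun h => absurd h hα⟩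
  choose f hf using hf
  have hcover : T ∩ {δ ∈ S | ∀ α ∈ C δ, f α ≤ t δ} ⊆
      ⋃ i : a, {δ ∈ S | ∀ α ∈ C δ, fi i α ≤ g (t δ) i} := by
    rintro δ ⟨hδT, hδS, hle⟩
    obtain ⟨i, hia, hi⟩ := exists_mem_forall_lt_of_dominatedOn hIstar hIstarComp hmono ha
      (hCcard δ hδS) (fun α i => fi i α) (fun α => f α) (t δ) (fun α => hle α α.2)
      (fun α => hf α ⟨δ, hδT, α.2⟩)
    exact mem_iUnion.2 ⟨⟨i, hia⟩, hδS, fun α hα => (hi ⟨α, hα⟩).le⟩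
  obtain ⟨⟨i, hia⟩, hi⟩ := hIcomp.exists_notMem_of_subset_iUnion hI.mono
    ((mk_set_le a).trans_lt ((cantor _).trans (Order.lt_succ _)))
    (hI.inter_notMem hTS hT (ht f)) hcover
  exact ⟨i, hia, hi⟩

end Domination

theorem stmt9_general {ι : Type 1} {J : Type 1} [PartialOrder J]
    (Ji : ι → Type 1) [∀ i, PartialOrder (Ji i)]
    (S : Set Ordinal) (C : Ordinal → Set Ordinal)
    (I : Set (Set Ordinal)) (Istar : Set (Set ι)) (κ : Cardinal.{1})
    -- (a)
    (hOBB : OBBplus J S C I) (hI : IsIdealOn I S)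
    (hCcard : ∀ δ ∈ S, #(C δ) < κ)
    -- (b)
    (hIcomp : IdealComplete I (Order.succ (2 ^ #ι)))
    -- (d)
    (hIstar : IsIdeal Istar)
    (hIstarComp : IdealComplete Istar κ)
    -- (e)
    (g : J → ∀ i, Ji i)
    (hmono : ∀ s t : J, s < t → prodLT Ji Istar (g s) (g t))
    -- (f)
    (hbound : ∀ A₀ : Set ι, A₀ ∉ Istar → ∀ es < κ.ord, ∀ gs : Ordinal.{1} → ∀ i, Ji i,
      ∃ A : Set ι, A ⊆ A₀ ∧ A ∉ Istar ∧
        ∀ ε < es, ∃ t : J, {i | i ∈ A ∧ ¬ gs ε i < g t i} ∈ Istar) :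
    {i | ¬ OBB (Ji i) S C I} ∈ Istar := by
  by_contra hB
  obtain ⟨t, ht⟩ := hOBB
  have : ∀ i, Nonempty (Ji i) := fun i => ⟨g (t 0) i⟩
  have hfail : ∀ i ∈ {i | ¬ OBB (Ji i) S C I}, ∃ fi : Ordinal → Ji i,
      {δ ∈ S | ∀ α ∈ C δ, fi α ≤ g (t δ) i} ∈ I := fun i hi => by
    simp only [mem_ofPred_eq, OBB, not_exists, not_forall, not_not] at hi
    exact hi fun δ => g (t δ) i
  choose! fi hfi using hfail
  have hA : ∀ δ ∈ S, ∃ A ⊆ {i | ¬ OBB (Ji i) S C I}, A ∉ Istar ∧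
      ∀ α : C δ, DominatedOn Istar g A (fun i => fi i α) :=
    fun δ hδ => exists_dominatedOn_of_mk_lt hbound hB (hCcard δ hδ) _
  choose! A hAB hApos hAdom using hA
  obtain ⟨a, ha⟩ := hIcomp.exists_notMem_of_subset_iUnion hI.mono
    (s := fun a => {δ ∈ S | A δ = a}) (by rw [mk_set]; exact Order.lt_succ _)
    hI.base_not_mem fun δ hδ => mem_iUnion.2 ⟨A δ, hδ, rfl⟩
  obtain ⟨δ₀, hδ₀, rfl⟩ : {δ ∈ S | A δ = a}.Nonempty :=
    nonempty_iff_ne_empty.2 fun h => ha (h ▸ hI.empty_mem)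
  obtain ⟨i, hi, hpos⟩ := exists_mem_notMem_of_dominatedOn hI hIcomp hCcard hIstar hIstarComp
    hmono ht (hApos δ₀ hδ₀) (fun δ hδ => hδ.1) ha fi
    fun δ hδ α hα => hδ.2 ▸ hAdom δ hδ.1 ⟨α, hα⟩
  exact hpos (hfi i (hAB δ₀ hδ₀ hi))

/-- As in Statement 8, but with (f) relativized to every `I*`-positive
set `A₀`; the conclusion strengthens to `{i < i* : OBB_{J_i}(C̄, I)} = i*` mod `I*`. -/
theorem stmt9 {ι : Type 1} {J : Type 1} [PartialOrder J]
    (Ji : ι → Type 1) [∀ i, PartialOrder (Ji i)]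
    (S : Set Ordinal) (C : Ordinal → Set Ordinal)
    (I : Set (Set Ordinal)) (Istar : Set (Set ι)) (κ : Cardinal.{1})
    -- (a)
    (hOBB : OBBplus J S C I) (hI : IsIdealOn I S) (hC : ∀ δ ∈ S, C δ ⊆ Set.Iio δ)
    (hκ : κ.IsRegular) (hCcard : ∀ δ ∈ S, #(C δ) < κ)
    -- (b)
    (hIcomp : IdealComplete I (Order.succ (2 ^ #ι)))
    -- (c)
    (hJi : ∀ i, ∀ s : Ji i, ∃ t : Ji i, s < t)
    -- (d)
    (hIstar : IsIdeal Istar)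
    (hIstarComp : IdealComplete Istar κ)
    -- (e)
    (g : J → ∀ i, Ji i)
    (hmono : ∀ s t : J, s < t → prodLT Ji Istar (g s) (g t))
    -- (f)
    (hbound : ∀ A₀ : Set ι, A₀ ∉ Istar → ∀ es < κ.ord, ∀ gs : Ordinal.{1} → ∀ i, Ji i,
      ∃ A : Set ι, A ⊆ A₀ ∧ A ∉ Istar ∧
        ∀ ε < es, ∃ t : J, {i | i ∈ A ∧ ¬ gs ε i < g t i} ∈ Istar) :
    {i | ¬ OBB (Ji i) S C I} ∈ Istar :=
  stmt9_general Ji S C I Istar κ hOBB hI hCcard hIcomp hIstar hIstarComp g hmono hbound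
end

section
/- Let θ > κ be regular cardinals and λ ≥ χ regular cardinals with χ ∈ 𝔇_{θ,κ}. Let C̄ = ⟨C_δ : δ ∈ S⟩ where S ⊆ λ is stationary in λ and each C_δ ⊆ δ has order type κ with sup C_δ = δ, and let I be a θ⁺-complete ideal on S. If OBB_χ(C̄, I) holds, then OBB_θ(C̄, I) holds. -/
open Set Cardinal

universe u v

/-- `f` represents an element of `θ^θ`: on the domain `θ` its values are `< θ`. -/
def onDom (θ : Cardinal.{0}) (f : Ordinal → Ordinal) : Prop :=
  ∀ ε < θ.ord, f ε < θ.ord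

/-- `g` is a `(≤κ)`-bound of `F ⊆ θ^θ`: for every subfamily `F'` of cardinality `≤ κ`,
the set of `ε < θ` where `g` dominates all of `F'` is unbounded in `θ`. -/
def IsBoundLE (θ κ : Cardinal.{0}) (F : Set (Ordinal → Ordinal)) (g : Ordinal → Ordinal) :
    Prop :=
  ∀ F' ⊆ F, #F' ≤ Cardinal.lift.{1} κ →
    ∀ α < θ.ord, ∃ ε, α ≤ ε ∧ ε < θ.ord ∧ ∀ f ∈ F', f ε ≤ g ε

/-- `𝔡_{θ,κ}` (with `(≤κ)`-bounds): the least cardinality of a family `F ⊆ θ^θ`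
admitting no `(≤κ)`-bound. -/
noncomputable def dLE (θ κ : Cardinal.{0}) : Cardinal.{1} :=
  sInf {c | ∃ F : Set (Ordinal → Ordinal), (∀ f ∈ F, onDom θ f) ∧ #F = c ∧
    ¬ ∃ g, onDom θ g ∧ IsBoundLE θ κ F g}

/-- `C̄ = ⟨C_δ : δ ∈ S⟩` is a (strict) `(λ,κ)`-ladder system: `λ` is regular uncountable,
`S ⊆ {δ < λ : cf δ = κ}` is stationary in `λ`, and each `C_δ ⊆ δ` has order type `κ`
and is unbounded in `δ`. -/
def IsLadderSystem (lam κ : Cardinal.{0}) (S : Set Ordinal)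
    (C : Ordinal → Set Ordinal) : Prop :=
  lam.IsRegular ∧ Cardinal.aleph0 < lam ∧
  (∀ δ ∈ S, δ < lam.ord ∧ Ordinal.cof δ = κ) ∧
  IsStationaryIn S lam.ord ∧
  ∀ δ ∈ S, C δ ⊆ Set.Iio δ ∧ otp (C δ) = Ordinal.lift.{1} κ.ord ∧
    ∀ α < δ, ∃ β ∈ C δ, α ≤ β

/-- `𝔇_{θ,κ}`: the set of regular cardinals `χ > θ` for which there is a `⊆`-increasing
sequence `⟨F_ε : ε < χ⟩` of subsets of `θ^θ`, covering `θ^θ`, each admitting a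
`(≤κ)`-bound. -/
def Dset (θ κ : Cardinal.{0}) : Set Cardinal.{1} :=
  {χ | χ.IsRegular ∧ Cardinal.lift.{1} θ < χ ∧
    ∃ F : Ordinal.{1} → Set (Ordinal.{0} → Ordinal.{0}),
      (∀ ε₁ ε₂, ε₁ ≤ ε₂ → ε₂ < χ.ord → F ε₁ ⊆ F ε₂) ∧
      (∀ ε < χ.ord, ∀ f ∈ F ε, onDom θ f) ∧
      (∀ ε < χ.ord, ∃ g, onDom θ g ∧ IsBoundLE θ κ (F ε) g) ∧
      (∀ f, onDom θ f → ∃ ε < χ.ord, f ∈ F ε)}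

/-- `OBB_θ(C̄, I)` where as partial order we take the ordinals below `θv`. -/
def OBBc (θv : Ordinal.{v}) (S : Set Ordinal.{0}) (C : Ordinal.{0} → Set Ordinal.{0})
    (I : Set (Set Ordinal.{0})) : Prop :=
  ∃ t : Ordinal.{0} → Ordinal.{v}, (∀ δ ∈ S, t δ < θv) ∧
    ∀ f : Ordinal.{0} → Ordinal.{v}, (∀ α ∈ ⋃ δ ∈ S, C δ, f α < θv) →
      {δ ∈ S | ∀ α ∈ C δ, f α ≤ t δ} ∉ I

/-! Suppose `OBB_θ` fails and let `t̄` witness `OBB_χ`. For each `ζ < θ` the thresholds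
`δ ↦ g_{t_δ}(ζ)`, where `g_ε` is the `(≤κ)`-bound of `F_ε`, are defeated by some `f_ζ`, with
`I`-small good set `B_ζ`. For `α ∈ Dom(C̄)` the column `ζ ↦ f_ζ(α)` lies in `θ^θ`, so it has a rank
`r(α) < χ`: it lies in `F_{r(α)}`. If `δ` is good for `r` and `t̄`, all `κ` columns indexed by `C_δ`
lie in `F_{t_δ}`, so `g_{t_δ}` dominates them simultaneously at some `ζ < θ`, i.e. `δ ∈ B_ζ`.
Thus the `I`-positive good set of `r` lies in `⋃_{ζ<θ} B_ζ`, which is in `I` by `θ⁺`-completeness. -/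

theorem IdealComplete.biUnion_Iio_ord_mem {α : Type (u + 1)} {I : Set (Set α)}
    {θ : Cardinal.{u}} (hI : IdealComplete I (Order.succ (lift.{u + 1} θ)))
    {B : Ordinal.{u} → Set α} (hB : ∀ ζ ∈ Iio θ.ord, B ζ ∈ I) :
    ⋃ ζ ∈ Iio θ.ord, B ζ ∈ I := by
  rw [← sUnion_image]
  refine hI _ (image_subset_iff.2 hB) (mk_image_le.trans_lt ?_)
  rw [Cardinal.mk_Iio_ordinal, card_ord]
  exact Order.lt_succ _

theorem mk_eq_lift_of_otp_eq {s : Set Ordinal.{0}} {κ : Cardinal.{0}}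
    (h : otp s = Ordinal.lift.{1} κ.ord) : #s = lift.{1} κ := by
  have hcard : (otp s).card = #s := Ordinal.card_type _
  rw [← hcard, h, ← Ordinal.lift_card, card_ord]

section IsBoundLE

variable {θ κ : Cardinal.{0}} {F F' : Set (Ordinal → Ordinal)} {g : Ordinal → Ordinal}

theorem IsBoundLE.anti (hF : F' ⊆ F) (hg : IsBoundLE θ κ F g) : IsBoundLE θ κ F' g :=
  fun H hH => hg H (hH.trans hF)

theorem IsBoundLE.exists_forall_le (hg : IsBoundLE θ κ F g) (hθ : 0 < θ)
    {H : Set (Ordinal → Ordinal)} (hHF : H ⊆ F) (hH : #H ≤ lift.{1} κ) : ∃ ζ ∈ Iio θ.ord, ∀ h ∈ H, h ζ ≤ g ζ := by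
  obtain ⟨ζ, -, hζ, hle⟩ := hg H hHF hH 0 (ord_pos.2 hθ)
  exact ⟨ζ, hζ, hle⟩

end IsBoundLE

theorem exists_rank_of_mem_Dset {θ κ : Cardinal.{0}} {χ : Cardinal.{1}} (hχ : χ ∈ Dset θ κ) :
    ∃ (rank : (Ordinal → Ordinal) → Ordinal.{1}) (g : Ordinal.{1} → Ordinal → Ordinal),
      (∀ h, onDom θ h → rank h < χ.ord) ∧
      ∀ ε < χ.ord, onDom θ (g ε) ∧ IsBoundLE θ κ {h | onDom θ h ∧ rank h ≤ ε} (g ε) := by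
  obtain ⟨-, -, F, hFmono, -, hFbound, hFcover⟩ := hχ
  choose g hg using fun ε => (em (ε < χ.ord)).elim
    (fun hε => (hFbound ε hε).imp fun _ hg (_ : ε < χ.ord) => hg)
    (fun hε => ⟨id, fun h => absurd h hε⟩)
  choose rank hrank using fun h => (em (onDom θ h)).elim
    (fun hh => (hFcover h hh).imp fun _ hε (_ : onDom θ h) => hε)
    (fun hh => ⟨0, fun h => absurd h hh⟩)
  refine ⟨rank, g, fun h hh => (hrank h hh).1, fun ε hε => ⟨(hg ε hε).1, (hg ε hε).2.anti ?_⟩⟩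
  rintro h ⟨hh, hle⟩
  exact hFmono _ _ hle hε (hrank h hh).2

theorem exists_forall_mem_of_not_OBBc {θv : Ordinal.{v}} {S : Set Ordinal.{0}}
    {C : Ordinal.{0} → Set Ordinal.{0}} {I : Set (Set Ordinal.{0})} (hfail : ¬ OBBc θv S C I)
    {ι : Type*} (s : Set ι) (t : ι → Ordinal.{0} → Ordinal.{v})
    (ht : ∀ i ∈ s, ∀ δ ∈ S, t i δ < θv) :
    ∃ f : ι → Ordinal.{0} → Ordinal.{v}, (∀ i ∈ s, ∀ α ∈ ⋃ δ ∈ S, C δ, f i α < θv) ∧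
      ∀ i ∈ s, {δ ∈ S | ∀ α ∈ C δ, f i α ≤ t i δ} ∈ I := by
  simp only [OBBc, not_exists, not_and, not_forall, not_not] at hfail
  choose f hf using fun i => (em (i ∈ s)).elim
    (fun hi => (hfail (t i) (ht i hi)).imp fun _ hf (_ : i ∈ s) => hf)
    (fun hi => ⟨fun _ => 0, fun h => absurd h hi⟩)
  exact ⟨f, fun i hi => (hf i hi).1, fun i hi => (hf i hi).2⟩

theorem stmt12_general (θ κ : Cardinal.{0}) (χ : Cardinal.{1})
    (hθ : θ.IsRegular)
    (hχ : χ ∈ Dset θ κ)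
    (S : Set Ordinal) (C : Ordinal → Set Ordinal)
    (hCotp : ∀ δ ∈ S, otp (C δ) = Ordinal.lift.{1} κ.ord)
    (I : Set (Set Ordinal)) (hI : IsIdealOn I S)
    (hIcomp : IdealComplete I (Order.succ (Cardinal.lift.{1} θ)))
    (hOBBχ : OBBc χ.ord S C I) :
    OBBc θ.ord S C I := by
  obtain ⟨rank, g, hrank, hg⟩ := exists_rank_of_mem_Dset hχ
  obtain ⟨t, ht, hgood⟩ := hOBBχ
  by_contra hfail
  obtain ⟨f, hf, hbad⟩ := exists_forall_mem_of_not_OBBc hfail (Iio θ.ord)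
    (fun ζ δ => g (t δ) ζ) fun ζ hζ δ hδ => (hg _ (ht δ hδ)).1 ζ hζ
  let column : Ordinal → Ordinal → Ordinal := fun α ζ => f ζ α
  have hcolumn : ∀ α ∈ ⋃ δ ∈ S, C δ, onDom θ (column α) := fun α hα ζ hζ => hf ζ hζ α hα
  refine hgood (rank ∘ column) (fun α hα => hrank _ (hcolumn α hα))
    (hI.mono _ (hIcomp.biUnion_Iio_ord_mem hbad) _ ?_)
  rintro δ ⟨hδS, hδ⟩
  obtain ⟨ζ, hζ, hle⟩ := (hg _ (ht δ hδS)).2.exists_forall_le hθ.pos (H := column '' C δ)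
    (by rintro _ ⟨α, hα, rfl⟩; exact ⟨hcolumn α (mem_biUnion hδS hα), hδ α hα⟩)
    (mk_image_le.trans (mk_eq_lift_of_otp_eq (hCotp δ hδS)).le)
  exact mem_biUnion hζ ⟨hδS, fun α hα => hle _ (mem_image_of_mem _ hα)⟩

/-- Let `θ > κ` be regular, `λ ≥ χ` regular with `χ ∈ 𝔇_{θ,κ}`,
`C̄ = ⟨C_δ : δ ∈ S⟩` with `S ⊆ λ` stationary and `C_δ ⊆ δ` of order type `κ` unbounded
in `δ`, and `I` a `θ⁺`-complete ideal on `S`. If `OBB_χ(C̄, I)` then `OBB_θ(C̄, I)`. -/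
theorem stmt12 (θ κ lam : Cardinal.{0}) (χ : Cardinal.{1})
    (hθ : θ.IsRegular) (hκ : κ.IsRegular) (hκθ : κ < θ)
    (hlamreg : lam.IsRegular) (hχ : χ ∈ Dset θ κ) (hχlam : χ ≤ Cardinal.lift.{1} lam)
    (S : Set Ordinal) (C : Ordinal → Set Ordinal)
    (hS : S ⊆ Set.Iio lam.ord) (hStat : IsStationaryIn S lam.ord)
    (hCsub : ∀ δ ∈ S, C δ ⊆ Set.Iio δ)
    (hCotp : ∀ δ ∈ S, otp (C δ) = Ordinal.lift.{1} κ.ord)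
    (hCsup : ∀ δ ∈ S, ∀ α < δ, ∃ β ∈ C δ, α ≤ β)
    (I : Set (Set Ordinal)) (hI : IsIdealOn I S)
    (hIcomp : IdealComplete I (Order.succ (Cardinal.lift.{1} θ)))
    (hOBBχ : OBBc χ.ord S C I) :
    OBBc θ.ord S C I :=
  stmt12_general θ κ χ hθ hχ S C hCotp I hI hIcomp hOBBχ
end

section
/- Let θ > σ be regular cardinals. If cf(𝔡_{θ,σ}) > θ, then cf(𝔡_{θ,σ}) ∈ 𝔇_{θ,σ}. -/
open Set Cardinal

universe u v

/-- `g` is a `(<σ)`-bound of `F ⊆ θ^θ`: for every subfamily `F'` of cardinality `< σ`,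
the set of `ε < θ` where `g` dominates all of `F'` is unbounded in `θ`. -/
def IsBoundLT (θ σ : Cardinal.{0}) (F : Set (Ordinal → Ordinal)) (g : Ordinal → Ordinal) :
    Prop :=
  ∀ F' ⊆ F, #F' < Cardinal.lift.{1} σ →
    ∀ α < θ.ord, ∃ ε, α ≤ ε ∧ ε < θ.ord ∧ ∀ f ∈ F', f ε ≤ g ε

/-- `𝔡_{θ,σ}`: the least cardinality of a family `F ⊆ θ^θ` admitting no `(<σ)`-bound. -/
noncomputable def dLT (θ σ : Cardinal.{0}) : Cardinal.{1} :=
  sInf {c | ∃ F : Set (Ordinal → Ordinal), (∀ f ∈ F, onDom θ f) ∧ #F = c ∧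
    ¬ ∃ g, onDom θ g ∧ IsBoundLT θ σ F g}

/-- `𝔇_{θ,σ}`: the set of regular cardinals `χ > θ` for which there is a `⊆`-increasing
sequence `⟨F_ε : ε < χ⟩` of subsets of `θ^θ`, covering `θ^θ`, each admitting a
`(<σ)`-bound. -/
def DsetLT (θ σ : Cardinal.{0}) : Set Cardinal.{1} :=
  {χ | χ.IsRegular ∧ Cardinal.lift.{1} θ < χ ∧
    ∃ F : Ordinal.{1} → Set (Ordinal.{0} → Ordinal.{0}),
      (∀ ε₁ ε₂, ε₁ ≤ ε₂ → ε₂ < χ.ord → F ε₁ ⊆ F ε₂) ∧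
      (∀ ε < χ.ord, ∀ f ∈ F ε, onDom θ f) ∧
      (∀ ε < χ.ord, ∃ g, onDom θ g ∧ IsBoundLT θ σ (F ε) g) ∧
      (∀ f, onDom θ f → ∃ ε < χ.ord, f ∈ F ε)}

/-!
Take an unbounded family `F ⊆ θ^θ` of size `𝔡 = 𝔡_{θ,σ}`, well-order it in type `𝔡` and cut it
along a cofinal sequence of length `χ = cf 𝔡` into an increasing chain of pieces of size `< 𝔡`;
by minimality of `𝔡` each piece has a `(<σ)`-bound. Replace each piece `G` by the functions that
are eventually pointwise below members of some subfamily of `G` of size `< σ`: since `θ` and `σ`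
are regular, a `(<σ)`-bound of `G` stays one of this enlargement. Any `f ∈ θ^θ` fails to bound
`F`, which says exactly that `f` is eventually pointwise below members of some `X ⊆ F` of size
`< σ`; as `σ < θ < χ` and `χ` is regular, `X` lies inside one piece, so the chain covers `θ^θ`.
-/

theorem Ordinal.exists_le_of_mk_lt_cof {ι : Type (u + 1)} {f : ι → Ordinal.{u}} {a : Ordinal.{u}}
    (hι : #ι < Cardinal.lift.{u + 1} a.cof) (hf : ∀ i, f i < a) : ∃ b < a, ∀ i, f i ≤ b := by
  refine ⟨sSup (range f), Ordinal.sSup_lt_of_lt_cof ?_ (forall_mem_range.2 hf), fun i ↦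
    le_csSup ⟨a, forall_mem_range.2 fun j ↦ (hf j).le⟩ (mem_range_self i)⟩
  rw [← Ordinal.lift_cof]
  exact mk_range_le.trans_lt hι

theorem Cardinal.exists_monotone_cof_cover (α : Type u) (hα : ℵ₀ ≤ #α) :
    ∃ A : Ordinal.{u} → Set α, Monotone A ∧ (∀ ε < (#α).ord.cof.ord, #(A ε) < #α) ∧
      ∀ X : Set α, #X < (#α).ord.cof → ∃ ε < (#α).ord.cof.ord, X ⊆ A ε := by
  set W := (#α).ord.ToType
  obtain ⟨e⟩ : Nonempty (α ≃ W) := Cardinal.eq.1 (mk_ord_toType _).symm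
  obtain ⟨f, hf⟩ := Ordinal.exists_isFundamentalSeq (o := (#α).ord) rfl
  let g : Iio (#α).ord.cof.ord → W := fun i ↦ Ordinal.ToType.mk (f i)
  refine ⟨fun ε ↦ {x | ∃ i : Iio (#α).ord.cof.ord, i.1 ≤ ε ∧ e x ≤ g i},
    fun ε₁ ε₂ h x ⟨i, hi, hx⟩ ↦ ⟨i, hi.trans h, hx⟩, fun ε hε ↦ ?_, fun X hX ↦ ?_⟩
  · have hsub : {x | ∃ i : Iio (#α).ord.cof.ord, i.1 ≤ ε ∧ e x ≤ g i} ⊆ e ⁻¹' Iic (g ⟨ε, hε⟩) :=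
      fun x ⟨i, hi, hx⟩ ↦ hx.trans (Ordinal.ToType.mk.monotone (hf.strictMono.monotone hi))
    refine (mk_le_mk_of_subset hsub).trans_lt ?_
    rw [mk_preimage_equiv]
    exact (mk_Iic_lt _ (by simp [W]) (by simpa [W] using hα)).trans_eq (mk_ord_toType _)
  · have hcof : ∀ x : X, ∃ i, e x ≤ g i := fun x ↦ by
      obtain ⟨_, ⟨i, rfl⟩, hi⟩ := hf.isCofinal_range (Ordinal.ToType.mk.symm (e x))
      exact ⟨i, Ordinal.ToType.mk.symm_apply_le.1 hi⟩
    choose i hi using hcof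
    refine ⟨⨆ x, (i x).1, Ordinal.iSup_lt_of_lt_cof (by rwa [Ordinal.cof_ord_cof]) fun x ↦ (i x).2,
      fun x hx ↦ ⟨i ⟨x, hx⟩, Ordinal.le_iSup (fun x ↦ (i x).1) _, hi ⟨x, hx⟩⟩⟩

theorem Set.exists_monotone_cof_cover {β : Type u} (S : Set β) (hS : ℵ₀ ≤ #S) :
    ∃ A : Ordinal.{u} → Set β, Monotone A ∧ (∀ ε, A ε ⊆ S) ∧
      (∀ ε < (#S).ord.cof.ord, #(A ε) < #S) ∧
      ∀ X ⊆ S, #X < (#S).ord.cof → ∃ ε < (#S).ord.cof.ord, X ⊆ A ε := by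
  obtain ⟨A, hAmono, hAcard, hAcover⟩ := Cardinal.exists_monotone_cof_cover S hS
  refine ⟨fun ε ↦ (↑) '' A ε, fun _ _ h ↦ image_mono (hAmono h),
    fun _ ↦ Subtype.coe_image_subset _ _, fun ε hε ↦ mk_image_le.trans_lt (hAcard ε hε),
    fun X hXS hX ↦ ?_⟩
  obtain ⟨ε, hε, hXA⟩ := hAcover ((↑) ⁻¹' X)
    ((mk_preimage_of_injective _ _ Subtype.val_injective).trans_lt hX)
  exact ⟨ε, hε, fun x hx ↦ ⟨⟨x, hXS hx⟩, hXA hx, rfl⟩⟩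

def dominatedBySmall (θ σ : Cardinal.{0}) (G : Set (Ordinal → Ordinal)) :
    Set (Ordinal → Ordinal) :=
  {h | onDom θ h ∧ ∃ X ⊆ G, #X < Cardinal.lift.{1} σ ∧
    ∃ β < θ.ord, ∀ α, β ≤ α → α < θ.ord → ∃ f ∈ X, h α ≤ f α}

theorem dominatedBySmall_mono (θ σ : Cardinal.{0}) : Monotone (dominatedBySmall θ σ) :=
  fun _ _ hG _ ⟨hh, X, hX, hXσ, hβ⟩ ↦ ⟨hh, X, hX.trans hG, hXσ, hβ⟩

theorem IsBoundLT.dominatedBySmall {θ σ : Cardinal.{0}} (hθ : θ.IsRegular) (hσ : σ.IsRegular)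
    (hσθ : σ ≤ θ) {G : Set (Ordinal → Ordinal)} {g : Ordinal → Ordinal}
    (hg : IsBoundLT θ σ G g) : IsBoundLT θ σ (dominatedBySmall θ σ G) g := by
  intro F' hF' hF'σ α₀ hα₀
  choose X hXG hXσ β hβ hdom using fun h : F' ↦ (hF' h.2).2
  have hF'θ : #F' < Cardinal.lift.{1} θ.ord.cof := by
    rw [hθ.cof_ord]
    exact hF'σ.trans_le (lift_le.2 hσθ)
  obtain ⟨b, hb, hβb⟩ := Ordinal.exists_le_of_mk_lt_cof hF'θ hβ
  have hYσ : #(⋃ h, X h) < Cardinal.lift.{1} σ :=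
    (card_iUnion_lt_iff_forall_of_isRegular hσ.lift hF'σ).2 hXσ
  obtain ⟨ε, hαε, hε, hYG⟩ := hg _ (iUnion_subset hXG) hYσ (max α₀ b) (max_lt hα₀ hb)
  refine ⟨ε, le_of_max_le_left hαε, hε, fun h hh ↦ ?_⟩
  obtain ⟨f, hf, hhf⟩ := hdom ⟨h, hh⟩ ε ((hβb _).trans (le_of_max_le_right hαε)) hε
  exact hhf.trans (hYG f (mem_iUnion.2 ⟨_, hf⟩))

theorem mem_dominatedBySmall_of_not_isBoundLT {θ σ : Cardinal.{0}} {F : Set (Ordinal → Ordinal)}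
    {f : Ordinal → Ordinal} (hf : onDom θ f) (hF : ¬ IsBoundLT θ σ F f) :
    ∃ X ⊆ F, #X < Cardinal.lift.{1} σ ∧ f ∈ dominatedBySmall θ σ X := by
  simp only [IsBoundLT, not_forall, not_exists, not_and, exists_prop] at hF
  obtain ⟨X, hXF, hXσ, β, hβ, hX⟩ := hF
  exact ⟨X, hXF, hXσ, hf, X, subset_rfl, hXσ, β, hβ, fun α hβα hα ↦ by
    obtain ⟨h, hh, hfh⟩ := hX α hβα hα
    exact ⟨h, hh, (not_le.1 hfh).le⟩⟩

theorem exists_isBoundLT_of_mk_lt_dLT {θ σ : Cardinal.{0}} {G : Set (Ordinal → Ordinal)}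
    (hG : ∀ f ∈ G, onDom θ f) (hGd : #G < dLT θ σ) : ∃ g, onDom θ g ∧ IsBoundLT θ σ G g := by
  rw [dLT] at hGd
  by_contra h
  exact hGd.not_ge (csInf_le' ⟨G, hG, rfl, h⟩)

theorem exists_unbounded_of_dLT_ne_zero {θ σ : Cardinal.{0}} (hd : dLT θ σ ≠ 0) :
    ∃ F : Set (Ordinal → Ordinal), (∀ f ∈ F, onDom θ f) ∧ #F = dLT θ σ ∧
      ¬ ∃ g, onDom θ g ∧ IsBoundLT θ σ F g := by
  have hne : {c | ∃ F : Set (Ordinal → Ordinal), (∀ f ∈ F, onDom θ f) ∧ #F = c ∧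
      ¬ ∃ g, onDom θ g ∧ IsBoundLT θ σ F g}.Nonempty :=
    nonempty_iff_ne_empty.2 fun h ↦ hd (by rw [dLT, h, Cardinal.sInf_empty])
  exact csInf_mem hne

/-- Let `θ > σ` be regular. If `cf(𝔡_{θ,σ}) > θ` then
`cf(𝔡_{θ,σ}) ∈ 𝔇_{θ,σ}`. -/
theorem stmt13 (θ σ : Cardinal.{0})
    (hθ : θ.IsRegular) (hσ : σ.IsRegular) (hσθ : σ < θ)
    (hcf : Cardinal.lift.{1} θ < ((dLT θ σ).ord).cof) :
    ((dLT θ σ).ord).cof ∈ DsetLT θ σ := by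
  obtain ⟨F, hFdom, hFd, hFunb⟩ := exists_unbounded_of_dLT_ne_zero (θ := θ) (σ := σ) fun h ↦ by
    simp [h] at hcf
  rw [← hFd] at hcf ⊢
  have hF : ℵ₀ ≤ #F := (aleph0_le_lift.2 hθ.aleph0_le).trans (hcf.le.trans (Ordinal.cof_ord_le _))
  obtain ⟨A, hAmono, hAF, hAcard, hAcover⟩ := Set.exists_monotone_cof_cover F hF
  refine ⟨isRegular_cof (isSuccLimit_ord hF), hcf, fun ε ↦ dominatedBySmall θ σ (A ε),
    fun _ _ h _ ↦ dominatedBySmall_mono θ σ (hAmono h), fun _ _ _ hf ↦ hf.1, fun ε hε ↦ ?_,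
    fun f hf ↦ ?_⟩
  · obtain ⟨g, hg, hgA⟩ :=
      exists_isBoundLT_of_mk_lt_dLT (fun f hf ↦ hFdom f (hAF ε hf)) (hFd ▸ hAcard ε hε)
    exact ⟨g, hg, hgA.dominatedBySmall hθ hσ hσθ.le⟩
  · obtain ⟨X, hXF, hXσ, hfX⟩ :=
      mem_dominatedBySmall_of_not_isBoundLT hf fun hb ↦ hFunb ⟨f, hf, hb⟩
    obtain ⟨ε, hε, hXA⟩ := hAcover X hXF ((hXσ.trans (lift_lt.2 hσθ)).trans hcf)
    exact ⟨ε, hε, dominatedBySmall_mono θ σ hXA hfX⟩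
end
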